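/- If c is a totally silver coloring of a graph G with edges u_1v_1 and u_2v_2 satisfying c(u_1) = c(u_2), c(v_1) = c(v_2), u_1v_2 ∉ E(G) and u_2v_1 ∉ E(G), then the graph G' obtained by deleting u_1v_1 and u_2v_2 and adding u_1v_2 and u_2v_1 also has c as a totally silver coloring. -/

import Mathlib

/-- A totally silver coloring: each of the `k` colors appears exactly once on every
closed neighborhood `N[v]`. -/
def IsTotallySilver {V : Type*} {k : ℕ} (G : SimpleGraph V) (c : V → Fin k) : Prop :=
  ∀ v : V, ∀ i : Fin k, ∃! w : V, (w = v ∨ G.Adj v w) ∧ c w = i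

/-!
The closed neighbourhood of every vertex after the switch is the image of its old closed
neighbourhood under a colour-preserving permutation: `v₁ ↔ v₂` for `u₁, u₂`, `u₁ ↔ u₂` for
`v₁, v₂`, the identity elsewhere. These permutations fit only because the four vertices are
distinct; `u₁ ≠ v₂` and `u₂ ≠ v₁` hold because the colouring is proper.
-/

open Equiv

namespace IsTotallySilver

variable {V : Type*} {k : ℕ} {G G' : SimpleGraph V} {c : V → Fin k}

theorem ne_of_adj (hc : IsTotallySilver G c) {v w : V} (h : G.Adj v w) : c v ≠ c w := by
  intro hvw
  obtain ⟨_, _, huniq⟩ := hc v (c v)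
  exact h.ne ((huniq v ⟨Or.inl rfl, rfl⟩).trans (huniq w ⟨Or.inr h, hvw.symm⟩).symm)

theorem of_perm (hc : IsTotallySilver G c)
    (h : ∀ v, ∃ τ : Perm V, (∀ w, c (τ w) = c w) ∧
      ∀ w, (w = v ∨ G'.Adj v w ↔ τ w = v ∨ G.Adj v (τ w))) :
    IsTotallySilver G' c := by
  intro v i
  obtain ⟨τ, hτc, hτ⟩ := h v
  refine (τ.existsUnique_congr fun w => ?_).mpr (hc v i)
  rw [hτ, hτc]

end IsTotallySilver

namespace SimpleGraph

variable {V : Type*} (G : SimpleGraph V)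

def twoSwitch (u₁ v₁ u₂ v₂ : V) : SimpleGraph V :=
  G.deleteEdges {s(u₁, v₁), s(u₂, v₂)} ⊔
    fromRel (fun a b => (a = u₁ ∧ b = v₂) ∨ (a = u₂ ∧ b = v₁))

variable {G} {u₁ v₁ u₂ v₂ : V}

theorem twoSwitch_adj {a b : V} :
    (G.twoSwitch u₁ v₁ u₂ v₂).Adj a b ↔
      (G.Adj a b ∧ ¬(s(a, b) = s(u₁, v₁) ∨ s(a, b) = s(u₂, v₂))) ∨
        (a ≠ b ∧ (s(a, b) = s(u₁, v₂) ∨ s(a, b) = s(u₂, v₁))) := by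
  simp only [twoSwitch, sup_adj, deleteEdges_adj, fromRel_adj, Set.mem_insert_iff,
    Set.mem_singleton_iff, Sym2.eq_iff]
  grind

variable (u₁ v₁ u₂ v₂) in
theorem twoSwitch_comm : G.twoSwitch u₂ v₂ u₁ v₁ = G.twoSwitch u₁ v₁ u₂ v₂ := by
  ext
  simp only [twoSwitch_adj]
  tauto

variable (u₁ v₁ u₂ v₂) in
theorem twoSwitch_flip : G.twoSwitch v₁ u₁ v₂ u₂ = G.twoSwitch u₁ v₁ u₂ v₂ := by
  ext
  simp only [twoSwitch_adj, Sym2.eq_swap (a := v₁), Sym2.eq_swap (a := v₂)]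
  tauto

theorem twoSwitch_adj_of_ne {v : V} (h₁ : v ≠ u₁) (h₂ : v ≠ u₂) (h₃ : v ≠ v₁) (h₄ : v ≠ v₂)
    (w : V) : (G.twoSwitch u₁ v₁ u₂ v₂).Adj v w ↔ G.Adj v w := by
  simp only [twoSwitch_adj, Sym2.eq_iff]
  grind

theorem twoSwitch_adj_left_iff_swap [DecidableEq V] (h₁ : G.Adj u₁ v₁) (h₂ : G.Adj u₂ v₂)
    (hn₁ : ¬ G.Adj u₁ v₂) (hu₁v₂ : u₁ ≠ v₂) (w : V) :
    (w = u₁ ∨ (G.twoSwitch u₁ v₁ u₂ v₂).Adj u₁ w) ↔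
      (swap v₁ v₂ w = u₁ ∨ G.Adj u₁ (swap v₁ v₂ w)) := by
  have hu : u₁ ≠ u₂ := by rintro rfl; exact hn₁ h₂
  have hv : v₁ ≠ v₂ := by rintro rfl; exact hn₁ h₁
  have huv : u₁ ≠ v₁ := h₁.ne
  rcases eq_or_ne w v₁ with rfl | hw₁
  · simp only [swap_apply_left, twoSwitch_adj, Sym2.eq_iff]
    grind
  rcases eq_or_ne w v₂ with rfl | hw₂
  · simp only [swap_apply_right, twoSwitch_adj, Sym2.eq_iff]
    grind
  · simp only [swap_apply_of_ne_of_ne hw₁ hw₂, twoSwitch_adj, Sym2.eq_iff]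
    grind

theorem exists_perm_twoSwitch_adj_iff [DecidableEq V] (h₁ : G.Adj u₁ v₁) (h₂ : G.Adj u₂ v₂)
    (hn₁ : ¬ G.Adj u₁ v₂) (hn₂ : ¬ G.Adj u₂ v₁) (hu₁v₂ : u₁ ≠ v₂) (hu₂v₁ : u₂ ≠ v₁) (v : V) :
    ∃ τ : Perm V, (τ = swap v₁ v₂ ∨ τ = swap u₁ u₂ ∨ τ = 1) ∧
      ∀ w, (w = v ∨ (G.twoSwitch u₁ v₁ u₂ v₂).Adj v w) ↔ (τ w = v ∨ G.Adj v (τ w)) := by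
  by_cases hu : v = u₁ ∨ v = u₂
  · refine ⟨swap v₁ v₂, Or.inl rfl, ?_⟩
    rcases hu with rfl | rfl
    · exact twoSwitch_adj_left_iff_swap h₁ h₂ hn₁ hu₁v₂
    · rw [← twoSwitch_comm, swap_comm]
      exact twoSwitch_adj_left_iff_swap h₂ h₁ hn₂ hu₂v₁
  by_cases hv : v = v₁ ∨ v = v₂
  · refine ⟨swap u₁ u₂, Or.inr (Or.inl rfl), ?_⟩
    rcases hv with rfl | rfl
    · rw [← twoSwitch_flip]
      exact twoSwitch_adj_left_iff_swap h₁.symm h₂.symm (fun h => hn₂ h.symm) hu₂v₁.symm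
    · rw [← twoSwitch_flip, ← twoSwitch_comm, swap_comm]
      exact twoSwitch_adj_left_iff_swap h₂.symm h₁.symm (fun h => hn₁ h.symm) hu₁v₂.symm
  push Not at hu hv
  exact ⟨1, Or.inr (Or.inr rfl), fun w => by
    rw [twoSwitch_adj_of_ne hu.1 hu.2 hv.1 hv.2, Perm.one_apply]⟩

end SimpleGraph

theorem stmt_9 {V : Type*} (G : SimpleGraph V) {k : ℕ} (c : V → Fin k)
    (hc : IsTotallySilver G c) (u₁ v₁ u₂ v₂ : V)
    (h₁ : G.Adj u₁ v₁) (h₂ : G.Adj u₂ v₂)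
    (hu : c u₁ = c u₂) (hv : c v₁ = c v₂)
    (hn₁ : ¬ G.Adj u₁ v₂) (hn₂ : ¬ G.Adj u₂ v₁) :
    IsTotallySilver
      ((G.deleteEdges {s(u₁, v₁), s(u₂, v₂)}) ⊔
        SimpleGraph.fromRel (fun a b => (a = u₁ ∧ b = v₂) ∨ (a = u₂ ∧ b = v₁))) c := by
  classical
  have hu₁v₂ : u₁ ≠ v₂ := fun h => hc.ne_of_adj h₁ (by rw [h, hv])
  have hu₂v₁ : u₂ ≠ v₁ := fun h => hc.ne_of_adj h₂ (by rw [h, hv])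
  refine hc.of_perm (G' := G.twoSwitch u₁ v₁ u₂ v₂) fun v => ?_
  obtain ⟨τ, hτ, hadj⟩ := G.exists_perm_twoSwitch_adj_iff h₁ h₂ hn₁ hn₂ hu₁v₂ hu₂v₁ v
  refine ⟨τ, ?_, hadj⟩
  rcases hτ with rfl | rfl | rfl
  exacts [apply_swap_eq_self hv, apply_swap_eq_self hu, fun _ => rfl]
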